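/- Let n ≥ 1, let A = ℤ/2nℤ, and let Gₙ be the wreath product A ≀ Sₙ, realized on the set Sₙ × Aⁿ with multiplication (π, u)(π', v) = (ππ', π'·u + v), where the action of a permutation σ on a vector u ∈ Aⁿ is (σ·u)ᵢ = u_{σ(i)}. Let u = (1, 2, …, n) and v = (n, n−1, …, 1) (coordinates taken modulo 2n). Then the three subgroups H₁ = {(π, 0) : π ∈ Sₙ}, H₂ = {(π, π·u − u) : π ∈ Sₙ}, and H₃ = {(π, π·v − v) : π ∈ Sₙ}, each of order n!, satisfy the triple product property; hence Gₙ, a group of order n!·(2n)ⁿ, realizes ⟨n!, n!, n!⟩. -/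

import Mathlib

/-- The right quotient set `Q(S) = {s₁s₂⁻¹ : s₁, s₂ ∈ S}` of a subset of a group. -/
def rightQuotient {G : Type*} [Group G] (S : Set G) : Set G :=
  {g | ∃ s₁ ∈ S, ∃ s₂ ∈ S, g = s₁ * s₂⁻¹}

/-- Subsets `S₁, S₂, S₃` of a group satisfy the triple product property if whenever
`qᵢ ∈ Q(Sᵢ)` and `q₁q₂q₃ = 1`, we have `q₁ = q₂ = q₃ = 1`. -/
def TPP {G : Type*} [Group G] (S₁ S₂ S₃ : Set G) : Prop :=
  ∀ q₁ ∈ rightQuotient S₁, ∀ q₂ ∈ rightQuotient S₂, ∀ q₃ ∈ rightQuotient S₃,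
    q₁ * q₂ * q₃ = 1 → q₁ = 1 ∧ q₂ = 1 ∧ q₃ = 1

/-- A group `G` realizes `⟨n₁, n₂, n₃⟩` if there are finite subsets `Sᵢ ⊆ G` with
`|Sᵢ| = nᵢ` satisfying the triple product property. -/
def Realizes (G : Type*) [Group G] (n₁ n₂ n₃ : ℕ) : Prop :=
  ∃ S₁ S₂ S₃ : Set G, S₁.Finite ∧ S₂.Finite ∧ S₃.Finite ∧
    S₁.ncard = n₁ ∧ S₂.ncard = n₂ ∧ S₃.ncard = n₃ ∧ TPP S₁ S₂ S₃

section Wreath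

variable {n : ℕ}

/-- The underlying set of the wreath product `(ℤ/2nℤ) ≀ Sₙ`. -/
abbrev Wr (n : ℕ) := Equiv.Perm (Fin n) × (Fin n → ZMod (2 * n))

/-- Multiplication `(π, u)(π', v) = (ππ', π'·u + v)`, where `(σ·u)ᵢ = u_{σ(i)}`. -/
def wMul (p q : Wr n) : Wr n := (p.1 * q.1, p.2 ∘ ⇑q.1 + q.2)

/-- Inversion for `wMul`. -/
def wInv (p : Wr n) : Wr n := (p.1⁻¹, -(p.2 ∘ ⇑p.1⁻¹))

lemma wMul_assoc (p q r : Wr n) : wMul (wMul p q) r = wMul p (wMul q r) := by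
  simp only [wMul, Prod.mk.injEq]
  refine ⟨mul_assoc _ _ _, ?_⟩
  funext i
  simp [Equiv.Perm.mul_apply, add_assoc]

lemma one_wMul (p : Wr n) : wMul (1, 0) p = p := by
  simp only [wMul, one_mul]
  ext <;> simp

lemma wMul_one (p : Wr n) : wMul p (1, 0) = p := by
  simp only [wMul, mul_one]
  ext <;> simp

lemma wInv_wMul (p : Wr n) : wMul (wInv p) p = (1, 0) := by
  simp only [wMul, wInv, inv_mul_cancel, Prod.mk.injEq, true_and]
  funext i
  simp

/-- The wreath product group `(ℤ/2nℤ) ≀ Sₙ` realized on `Sₙ × (ℤ/2nℤ)ⁿ` with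
multiplication `(π, u)(π', v) = (ππ', π'·u + v)`. -/
def wrGroup (n : ℕ) : Group (Wr n) where
  mul := wMul
  one := (1, 0)
  inv := wInv
  div p q := wMul p (wInv q)
  div_eq_mul_inv _ _ := rfl
  npow := @npowRec _ ⟨(1, 0)⟩ ⟨wMul⟩
  npow_zero _ := rfl
  npow_succ _ _ := rfl
  mul_assoc := wMul_assoc
  one_mul := one_wMul
  mul_one := wMul_one
  inv_mul_cancel := wInv_wMul

/-- The vector `u = (1, 2, …, n)` of the construction. -/
def wu (n : ℕ) : Fin n → ZMod (2 * n) := fun i => ((i : ℕ) + 1 : ℕ)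

/-- The vector `v = (n, n−1, …, 1)` of the construction. -/
def wv (n : ℕ) : Fin n → ZMod (2 * n) := fun i => ((n - (i : ℕ) : ℕ) : ZMod (2 * n))

end Wreath

/-!
A relation `h₁h₂h₃ = 1` between the three subgroups forces `π₁π₂π₃ = 1` together with a
coordinatewise congruence which, for `σ = π₂π₃` and `τ = π₃`, reads `σ(i) + i ≡ 2τ(i) (mod 2n)`.
All terms lie in `[0, n)`, so this is the equation `σ(i) + i = 2τ(i)`: each `τ(i)` is the midpoint
of `σ(i)` and `i`. Summing `(σ(i) - i)² = 2σ(i)² + 2i² - 4τ(i)²` over `i` gives `0`, since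
`σ` and `τ` merely permute the squares; hence `σ = τ = 1`, and then `π₁ = π₂ = π₃ = 1`.
-/

open Equiv Function

theorem Equiv.Perm.eq_one_of_forall_add_eq_two_mul {α R : Type*} [Fintype α] [CommRing R]
    [LinearOrder R] [IsStrictOrderedRing R] {x : α → R} (hx : Injective x) {σ τ : Perm α}
    (h : ∀ i, x (σ i) + x i = 2 * x (τ i)) : σ = 1 ∧ τ = 1 := by
  have hsq : ∑ i, (x (σ i) - x i) ^ 2 = 0 :=
    calc ∑ i, (x (σ i) - x i) ^ 2
        = ∑ i, (2 * x (σ i) ^ 2 + 2 * x i ^ 2 - 4 * x (τ i) ^ 2) :=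
          Finset.sum_congr rfl fun i _ => by
            have hi := h i
            linear_combination (-(x (σ i)) - x i - 2 * x (τ i)) * hi
      _ = 0 := by
          simp only [Finset.sum_sub_distrib, Finset.sum_add_distrib, ← Finset.mul_sum,
            Equiv.sum_comp σ (fun i => x i ^ 2), Equiv.sum_comp τ (fun i => x i ^ 2)]
          ring
  have hσ (i : α) : σ i = i := by
    have := (Finset.sum_eq_zero_iff_of_nonneg fun j _ => sq_nonneg _).1 hsq i (Finset.mem_univ i)
    exact hx (sub_eq_zero.1 (pow_eq_zero_iff two_ne_zero |>.1 this))
  refine ⟨Equiv.ext hσ, Equiv.ext fun i => hx ?_⟩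
  have hi := h i
  rw [hσ] at hi
  simp only [Perm.one_apply]
  linarith

theorem rightQuotient_coe_subgroup {G : Type*} [Group G] (K : Subgroup G) :
    rightQuotient (K : Set G) = K := by
  ext g
  constructor
  · rintro ⟨s₁, h₁, s₂, h₂, rfl⟩
    exact mul_mem h₁ (inv_mem h₂)
  · intro hg
    exact ⟨g, hg, 1, K.one_mem, by simp⟩

theorem tpp_coe_subgroup_iff {G : Type*} [Group G] (H₁ H₂ H₃ : Subgroup G) :
    TPP (H₁ : Set G) H₂ H₃ ↔ ∀ h₁ ∈ H₁, ∀ h₂ ∈ H₂, ∀ h₃ ∈ H₃,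
      h₁ * h₂ * h₃ = 1 → h₁ = 1 ∧ h₂ = 1 ∧ h₃ = 1 := by
  simp only [TPP, rightQuotient_coe_subgroup, SetLike.mem_coe]

theorem Set.ncard_setOf_exists_eq_mk {α β : Type*} (f : α → β) :
    {p : α × β | ∃ a, p = (a, f a)}.ncard = Nat.card α := by
  have hrange : {p : α × β | ∃ a, p = (a, f a)} = Set.range fun a => (a, f a) := by
    ext p
    simp [eq_comm]
  rw [hrange, Set.ncard_range_of_injective fun a b hab => congrArg Prod.fst hab]

namespace Wreath

variable {n : ℕ}

/-- The conjugate of `{(π, 0)}` by `(1, w)`. -/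
def conjPermSubgroup (n : ℕ) (w : Fin n → ZMod (2 * n)) : @Subgroup (Wr n) (wrGroup n) :=
  letI := wrGroup n
  { carrier := {p | ∃ π : Perm (Fin n), p = (π, w ∘ ⇑π - w)}
    mul_mem' := by
      rintro _ _ ⟨π, rfl⟩ ⟨π', rfl⟩
      refine ⟨π * π', Prod.ext rfl (funext fun i => ?_)⟩
      show w (π (π' i)) - w (π' i) + (w (π' i) - w i) = w (π (π' i)) - w i
      abel
    one_mem' := ⟨1, Prod.ext rfl (funext fun i => (sub_self (w i)).symm)⟩
    inv_mem' := by
      rintro _ ⟨π, rfl⟩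
      refine ⟨π⁻¹, Prod.ext rfl (funext fun i => ?_)⟩
      show -(w (π (π⁻¹ i)) - w (π⁻¹ i)) = w (π⁻¹ i) - w i
      simp }

theorem coe_conjPermSubgroup (w : Fin n → ZMod (2 * n)) :
    (conjPermSubgroup n w : Set (Wr n)) = {p | ∃ π : Perm (Fin n), p = (π, w ∘ ⇑π - w)} :=
  rfl

theorem coe_conjPermSubgroup_zero :
    (conjPermSubgroup n 0 : Set (Wr n)) = {p | ∃ π : Perm (Fin n), p = (π, 0)} := by
  simp [coe_conjPermSubgroup]

theorem wu_sub_wu (i j : Fin n) : wu n i - wu n j = (((i : ℕ) - (j : ℕ) : ℤ) : ZMod (2 * n)) := by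
  simp only [wu]
  push_cast
  ring

theorem wv_sub_wv (i j : Fin n) : wv n i - wv n j = (((j : ℕ) - (i : ℕ) : ℤ) : ZMod (2 * n)) := by
  simp only [wv]
  push_cast [Nat.cast_sub i.isLt.le, Nat.cast_sub j.isLt.le]
  ring

theorem add_eq_two_mul_of_snd_wMul_eq_zero {π₂ π₃ : Perm (Fin n)}
    (h : (wMul (π₂, wu n ∘ ⇑π₂ - wu n) (π₃, wv n ∘ ⇑π₃ - wv n)).2 = 0) (i : Fin n) :
    ((π₂ (π₃ i) : ℕ) : ℤ) + (i : ℕ) = 2 * (π₃ i : ℕ) := by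
  have hdvd := congrFun h i
  simp only [wMul, Pi.add_apply, Pi.sub_apply, comp_apply, Pi.zero_apply, wu_sub_wu, wv_sub_wv,
    ← Int.cast_add, ZMod.intCast_zmod_eq_zero_iff_dvd] at hdvd
  have := (π₂ (π₃ i)).isLt
  have := (π₃ i).isLt
  have := i.isLt
  have hzero := Int.eq_zero_of_abs_lt_dvd hdvd (abs_lt.2 ⟨by push_cast; omega, by push_cast; omega⟩)
  omega

theorem eq_one_of_snd_wMul_eq_zero {π₂ π₃ : Perm (Fin n)}
    (h : (wMul (π₂, wu n ∘ ⇑π₂ - wu n) (π₃, wv n ∘ ⇑π₃ - wv n)).2 = 0) : π₂ = 1 ∧ π₃ = 1 := by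
  obtain ⟨hσ, hτ⟩ := Perm.eq_one_of_forall_add_eq_two_mul (σ := π₂ * π₃)
    (x := fun i : Fin n => ((i : ℕ) : ℤ)) (Nat.cast_injective.comp Fin.val_injective)
    (add_eq_two_mul_of_snd_wMul_eq_zero h)
  rw [hτ, mul_one] at hσ
  exact ⟨hσ, hτ⟩

theorem eq_one_of_wMul_wMul_eq_one {h₁ h₂ h₃ : Wr n} (h₁_mem : h₁ ∈ conjPermSubgroup n 0)
    (h₂_mem : h₂ ∈ conjPermSubgroup n (wu n)) (h₃_mem : h₃ ∈ conjPermSubgroup n (wv n))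
    (h : wMul (wMul h₁ h₂) h₃ = (1, 0)) : h₁ = (1, 0) ∧ h₂ = (1, 0) ∧ h₃ = (1, 0) := by
  obtain ⟨π₁, rfl⟩ := h₁_mem
  obtain ⟨π₂, rfl⟩ := h₂_mem
  obtain ⟨π₃, rfl⟩ := h₃_mem
  simp only [wMul, Prod.mk.injEq, Pi.zero_comp, sub_zero, zero_add] at h
  obtain ⟨rfl, rfl⟩ := eq_one_of_snd_wMul_eq_zero h.2
  obtain rfl : π₁ = 1 := by simpa using h.1
  simp

end Wreath

theorem stmt_14_general (n : ℕ) :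
    Nat.card (Wr n) = Nat.factorial n * (2 * n) ^ n ∧
    {p : Wr n | ∃ π : Equiv.Perm (Fin n), p = (π, 0)}.ncard = Nat.factorial n ∧
    {p : Wr n | ∃ π : Equiv.Perm (Fin n), p = (π, wu n ∘ ⇑π - wu n)}.ncard = Nat.factorial n ∧
    {p : Wr n | ∃ π : Equiv.Perm (Fin n), p = (π, wv n ∘ ⇑π - wv n)}.ncard = Nat.factorial n ∧
    (∃ K₁ K₂ K₃ : @Subgroup (Wr n) (wrGroup n),
      (K₁ : Set (Wr n)) = {p : Wr n | ∃ π : Equiv.Perm (Fin n), p = (π, 0)} ∧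
      (K₂ : Set (Wr n)) = {p : Wr n | ∃ π : Equiv.Perm (Fin n), p = (π, wu n ∘ ⇑π - wu n)} ∧
      (K₃ : Set (Wr n)) = {p : Wr n | ∃ π : Equiv.Perm (Fin n), p = (π, wv n ∘ ⇑π - wv n)}) ∧
    @TPP (Wr n) (wrGroup n)
      {p : Wr n | ∃ π : Equiv.Perm (Fin n), p = (π, 0)}
      {p : Wr n | ∃ π : Equiv.Perm (Fin n), p = (π, wu n ∘ ⇑π - wu n)}
      {p : Wr n | ∃ π : Equiv.Perm (Fin n), p = (π, wv n ∘ ⇑π - wv n)} ∧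
    @Realizes (Wr n) (wrGroup n) (Nat.factorial n) (Nat.factorial n) (Nat.factorial n) := by
  let _ : Group (Wr n) := wrGroup n
  have hK₁ := Wreath.coe_conjPermSubgroup_zero (n := n)
  have hK₂ := Wreath.coe_conjPermSubgroup (wu n)
  have hK₃ := Wreath.coe_conjPermSubgroup (wv n)
  have hcard (f : Equiv.Perm (Fin n) → Fin n → ZMod (2 * n)) :
      {p : Wr n | ∃ π, p = (π, f π)}.ncard = n.factorial := by
    rw [Set.ncard_setOf_exists_eq_mk, Nat.card_perm, Nat.card_fin]
  have hfinite (f : Equiv.Perm (Fin n) → Fin n → ZMod (2 * n)) :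
      {p : Wr n | ∃ π, p = (π, f π)}.Finite :=
    Set.finite_of_ncard_ne_zero (hcard f ▸ n.factorial_ne_zero)
  have htpp : TPP {p : Wr n | ∃ π : Equiv.Perm (Fin n), p = (π, 0)}
      {p : Wr n | ∃ π : Equiv.Perm (Fin n), p = (π, wu n ∘ ⇑π - wu n)}
      {p : Wr n | ∃ π : Equiv.Perm (Fin n), p = (π, wv n ∘ ⇑π - wv n)} := by
    rw [← hK₁, ← hK₂, ← hK₃, tpp_coe_subgroup_iff]
    exact fun h₁ h₁_mem h₂ h₂_mem h₃ h₃_mem ↦ Wreath.eq_one_of_wMul_wMul_eq_one h₁_mem h₂_mem h₃_mem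
  refine ⟨?_, hcard _, hcard _, hcard _, ⟨_, _, _, hK₁, hK₂, hK₃⟩, htpp,
    ⟨_, _, _, hfinite _, hfinite _, hfinite _, hcard _, hcard _, hcard _, htpp⟩⟩
  rw [Nat.card_prod, Nat.card_perm, Nat.card_fun, Nat.card_zmod, Nat.card_fin]

theorem stmt_14 (n : ℕ) (hn : 1 ≤ n) :
    Nat.card (Wr n) = Nat.factorial n * (2 * n) ^ n ∧
    {p : Wr n | ∃ π : Equiv.Perm (Fin n), p = (π, 0)}.ncard = Nat.factorial n ∧
    {p : Wr n | ∃ π : Equiv.Perm (Fin n), p = (π, wu n ∘ ⇑π - wu n)}.ncard = Nat.factorial n ∧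
    {p : Wr n | ∃ π : Equiv.Perm (Fin n), p = (π, wv n ∘ ⇑π - wv n)}.ncard = Nat.factorial n ∧
    (∃ K₁ K₂ K₃ : @Subgroup (Wr n) (wrGroup n),
      (K₁ : Set (Wr n)) = {p : Wr n | ∃ π : Equiv.Perm (Fin n), p = (π, 0)} ∧
      (K₂ : Set (Wr n)) = {p : Wr n | ∃ π : Equiv.Perm (Fin n), p = (π, wu n ∘ ⇑π - wu n)} ∧
      (K₃ : Set (Wr n)) = {p : Wr n | ∃ π : Equiv.Perm (Fin n), p = (π, wv n ∘ ⇑π - wv n)}) ∧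
    @TPP (Wr n) (wrGroup n)
      {p : Wr n | ∃ π : Equiv.Perm (Fin n), p = (π, 0)}
      {p : Wr n | ∃ π : Equiv.Perm (Fin n), p = (π, wu n ∘ ⇑π - wu n)}
      {p : Wr n | ∃ π : Equiv.Perm (Fin n), p = (π, wv n ∘ ⇑π - wv n)} ∧
    @Realizes (Wr n) (wrGroup n) (Nat.factorial n) (Nat.factorial n) (Nat.factorial n) :=
  stmt_14_general n
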